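/- arXiv:2004.05298 — 3 statements merged into one kernel-verified Lean document; each statement's English description precedes it below -/
import Mathlib

section
/- (Convergence of RSGD) Let R_S : ℝ^d → ℝ be differentiable with β-Lipschitz gradient and bounded below by R_S(x_*). On a probability space with filtration (𝔉_t), let (x_t) and (r_t) be adapted sequences of random vectors in ℝ^d with x_0 deterministic and r_0 = 0, and let (g_t) be random vectors with g_t measurable with respect to 𝔉_{t+1}, E[g_t | 𝔉_t] = ∇R_S(x_t − r_t), and E‖g_t‖² ≤ σ² for all t. Suppose the reference-trajectory relation x_{t+1} − r_{t+1} = (x_t − r_t) − γ·g_t holds for all t, for a fixed learning rate γ > 0 with γ ≤ 1/β. Then for every c₁ > 0 and every T ≥ 1, min_{0 ≤ t ≤ T−1} E‖∇R_S(x_t)‖² ≤ (1+c₁)·(R_S(x_0) − R_S(x_*))/(γT) + (1+c₁)·β·γ·σ²/2 + (1 + 1/c₁)·β²·(∑_{t=0}^{T−1} E‖r_t‖²)/T. -/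
/-!
The reference trajectory `y t = x t - r t` is plain SGD on `R_S`. The descent lemma for a
`β`-smooth function and unbiasedness of `g t` given `ℱ t` give
`E R_S(y (t+1)) ≤ E R_S(y t) - γ E‖∇R_S(y t)‖² + βγ²σ²/2`, which telescopes, together with
`R_S ≥ R_S(x_*)`, to a bound on `∑ E‖∇R_S(y t)‖²`. Since `‖∇R_S(x t) - ∇R_S(y t)‖ ≤ β‖r t‖`, the
inequality `(a + b)² ≤ (1 + c)a² + (1 + 1/c)b²` transfers this bound to the gradients at `x t`,
and the minimum over `t < T` is at most the average.
-/

open MeasureTheory Finset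
open scoped RealInnerProductSpace

theorem add_sq_le_one_add_mul_sq_add_one_add_inv_mul_sq (a b : ℝ) {c : ℝ} (hc : 0 < c) :
    (a + b) ^ 2 ≤ (1 + c) * a ^ 2 + (1 + 1 / c) * b ^ 2 := by
  have key : (1 + c) * a ^ 2 + (1 + 1 / c) * b ^ 2 - (a + b) ^ 2 = (c * a - b) ^ 2 / c := by
    field_simp
    ring
  linarith [div_nonneg (sq_nonneg (c * a - b)) hc.le]

theorem Finset.inf'_le_of_sum_le_card_mul {ι : Type*} {s : Finset ι} (hs : s.Nonempty)
    (f : ι → ℝ) {B : ℝ} (h : ∑ i ∈ s, f i ≤ #s * B) : s.inf' hs f ≤ B := by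
  obtain ⟨i, hi, hfi⟩ := exists_le_of_sum_le hs (g := fun _ => B) (by simpa using h)
  exact (inf'_le f hi).trans hfi

section GradientLipschitz

variable {E : Type*} [NormedAddCommGroup E] [InnerProductSpace ℝ E] [CompleteSpace E]
  {f : E → ℝ} {β : ℝ}

theorem continuous_gradient_of_norm_sub_le
    (hsmooth : ∀ x y, ‖gradient f x - gradient f y‖ ≤ β * ‖x - y‖) :
    Continuous (gradient f) :=
  (LipschitzWith.of_dist_le' fun x y => by simpa only [dist_eq_norm] using hsmooth x y).continuous

theorem apply_le_add_inner_gradient_add_sq (hf : Differentiable ℝ f)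
    (hsmooth : ∀ x y, ‖gradient f x - gradient f y‖ ≤ β * ‖x - y‖) (a b : E) :
    f b ≤ f a + ⟪gradient f a, b - a⟫ + β / 2 * ‖b - a‖ ^ 2 := by
  set v := b - a
  -- `ψ` is antitone on `[0, 1]`: its derivative is `⟪∇f (a + t • v) - ∇f a, v⟫ - β t ‖v‖² ≤ 0`.
  set ψ : ℝ → ℝ := fun t => f (a + t • v) - t * ⟪gradient f a, v⟫ - t ^ 2 * (β / 2 * ‖v‖ ^ 2)
  have hψ : ∀ t, HasDerivAt ψ
      (⟪gradient f (a + t • v) - gradient f a, v⟫ - 2 * t * (β / 2 * ‖v‖ ^ 2)) t := by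
    intro t
    have hline : HasDerivAt (fun s : ℝ => a + s • v) v t := by
      simpa using ((hasDerivAt_id t).smul_const v).const_add a
    have hcomp : HasDerivAt (fun s : ℝ => f (a + s • v)) ⟪gradient f (a + t • v), v⟫ t := by
      simpa [InnerProductSpace.toDual_apply_apply, Function.comp_def] using
        (hf (a + t • v)).hasGradientAt.hasFDerivAt.comp_hasDerivAt t hline
    refine ((hcomp.sub ((hasDerivAt_id t).mul_const ⟪gradient f a, v⟫)).sub
      ((hasDerivAt_pow 2 t).mul_const (β / 2 * ‖v‖ ^ 2))).congr_deriv ?_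
    rw [inner_sub_left]
    norm_num
  have hψ_nonpos : ∀ t ∈ interior (Set.Icc (0 : ℝ) 1), deriv ψ t ≤ 0 := by
    intro t ht
    rw [interior_Icc] at ht
    have hlip : ‖gradient f (a + t • v) - gradient f a‖ ≤ β * (t * ‖v‖) := by
      simpa [norm_smul, abs_of_pos ht.1] using hsmooth (a + t • v) a
    rw [(hψ t).deriv, sub_nonpos]
    calc ⟪gradient f (a + t • v) - gradient f a, v⟫
        ≤ ‖gradient f (a + t • v) - gradient f a‖ * ‖v‖ := real_inner_le_norm _ _
      _ ≤ β * (t * ‖v‖) * ‖v‖ := by gcongr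
      _ = 2 * t * (β / 2 * ‖v‖ ^ 2) := by ring
  have hanti : AntitoneOn ψ (Set.Icc 0 1) :=
    antitoneOn_of_deriv_nonpos (convex_Icc 0 1)
      (fun t _ => (hψ t).continuousAt.continuousWithinAt)
      (fun t _ => (hψ t).differentiableAt.differentiableWithinAt) hψ_nonpos
  have h0 : ψ 0 = f a := by simp [ψ]
  have h1 : ψ 1 = f b - ⟪gradient f a, b - a⟫ - β / 2 * ‖b - a‖ ^ 2 := by simp [ψ, v]
  linarith [hanti (by simp) (by simp) zero_le_one]

theorem apply_sub_smul_le (hf : Differentiable ℝ f)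
    (hsmooth : ∀ x y, ‖gradient f x - gradient f y‖ ≤ β * ‖x - y‖) (a v : E) (γ : ℝ) :
    f (a - γ • v) ≤ f a - γ * ⟪gradient f a, v⟫ + β / 2 * γ ^ 2 * ‖v‖ ^ 2 := by
  have h := apply_le_add_inner_gradient_add_sq hf hsmooth a (a - γ • v)
  rw [sub_sub_cancel_left, inner_neg_right, real_inner_smul_right, norm_neg, norm_smul,
    mul_pow, Real.norm_eq_abs, sq_abs] at h
  linarith

theorem norm_gradient_sq_le
    (hsmooth : ∀ x y, ‖gradient f x - gradient f y‖ ≤ β * ‖x - y‖) {c : ℝ} (hc : 0 < c)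
    (x y : E) :
    ‖gradient f x‖ ^ 2 ≤ (1 + c) * ‖gradient f y‖ ^ 2 + (1 + 1 / c) * β ^ 2 * ‖x - y‖ ^ 2 := by
  have hdiff : ‖gradient f x - gradient f y‖ ^ 2 ≤ β ^ 2 * ‖x - y‖ ^ 2 := by
    rw [← mul_pow]
    exact pow_le_pow_left₀ (norm_nonneg _) (hsmooth x y) 2
  calc ‖gradient f x‖ ^ 2 ≤ (‖gradient f y‖ + ‖gradient f x - gradient f y‖) ^ 2 :=
        pow_le_pow_left₀ (norm_nonneg _) (norm_le_norm_add_norm_sub' _ _) 2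
    _ ≤ (1 + c) * ‖gradient f y‖ ^ 2 + (1 + 1 / c) * ‖gradient f x - gradient f y‖ ^ 2 :=
        add_sq_le_one_add_mul_sq_add_one_add_inv_mul_sq _ _ hc
    _ ≤ (1 + c) * ‖gradient f y‖ ^ 2 + (1 + 1 / c) * β ^ 2 * ‖x - y‖ ^ 2 := by
        rw [mul_assoc]; gcongr

end GradientLipschitz

theorem MeasureTheory.MemLp.integrable_inner {Ω E : Type*} [NormedAddCommGroup E]
    [InnerProductSpace ℝ E] {m0 : MeasurableSpace Ω} {μ : Measure Ω} {F G : Ω → E}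
    (hF : MemLp F 2 μ) (hG : MemLp G 2 μ) : Integrable (fun ω => ⟪F ω, G ω⟫) μ :=
  memLp_one_iff_integrable.1 ((innerSL ℝ).memLp_of_bilin 1 hF hG)

theorem MeasureTheory.integral_inner_condExp_of_stronglyMeasurable_left {Ω E : Type*}
    [NormedAddCommGroup E] [InnerProductSpace ℝ E] [CompleteSpace E]
    {m m0 : MeasurableSpace Ω} {μ : Measure Ω} [IsFiniteMeasure μ] (hm : m ≤ m0) {F g : Ω → E}
    (hF : StronglyMeasurable[m] F) (hg : Integrable g μ)
    (hFg : Integrable (fun ω => ⟪F ω, g ω⟫) μ) :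
    ∫ ω, ⟪F ω, g ω⟫ ∂μ = ∫ ω, ⟪F ω, (μ[g|m]) ω⟫ ∂μ := by
  have := isFiniteMeasure_trim (μ := μ) hm
  calc ∫ ω, ⟪F ω, g ω⟫ ∂μ = ∫ ω, (μ[fun ω => ⟪F ω, g ω⟫|m]) ω ∂μ := (integral_condExp hm).symm
    _ = ∫ ω, ⟪F ω, (μ[g|m]) ω⟫ ∂μ :=
      integral_congr_ae (condExp_bilin_of_stronglyMeasurable_left (innerSL ℝ) hF hFg hg)

section SGD

variable {E : Type*} [NormedAddCommGroup E] [InnerProductSpace ℝ E] [CompleteSpace E]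
  {f : E → ℝ} {β γ σ : ℝ} {x₀ : E} {Ω : Type*} {m0 : MeasurableSpace Ω} {μ : Measure Ω}
  {y g : ℕ → Ω → E}

theorem memLp_gradient_comp_of_sub_smul [IsFiniteMeasure μ]
    (hsmooth : ∀ x y, ‖gradient f x - gradient f y‖ ≤ β * ‖x - y‖)
    (hy : ∀ t, AEStronglyMeasurable (y t) μ) (hy0 : ∀ ω, y 0 ω = x₀)
    (hg : ∀ t, MemLp (g t) 2 μ) (hstep : ∀ t ω, y (t + 1) ω = y t ω - γ • g t ω) (t : ℕ) :
    MemLp (fun ω => gradient f (y t ω)) 2 μ := by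
  induction t with
  | zero => simpa only [hy0] using memLp_const (gradient f x₀)
  | succ t ih =>
    have hmeas : ∀ s, AEStronglyMeasurable (fun ω => gradient f (y s ω)) μ := fun s =>
      (continuous_gradient_of_norm_sub_le hsmooth).comp_aestronglyMeasurable (hy s)
    have hincr : MemLp (fun ω => gradient f (y (t + 1) ω) - gradient f (y t ω)) 2 μ := by
      refine (hg t).of_le_mul (c := β * |γ|) ((hmeas _).sub (hmeas _)) (ae_of_all _ fun ω => ?_)
      simpa [hstep, norm_smul, mul_assoc] using hsmooth (y (t + 1) ω) (y t ω)
    convert ih.add hincr using 1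
    ext ω
    simp

theorem integrable_comp_of_sub_smul [IsFiniteMeasure μ] (hf : Differentiable ℝ f)
    (hsmooth : ∀ x y, ‖gradient f x - gradient f y‖ ≤ β * ‖x - y‖) {xstar : E}
    (hlb : ∀ x, f xstar ≤ f x) (hy : ∀ t, AEStronglyMeasurable (y t) μ)
    (hy0 : ∀ ω, y 0 ω = x₀) (hg : ∀ t, MemLp (g t) 2 μ)
    (hstep : ∀ t ω, y (t + 1) ω = y t ω - γ • g t ω) (t : ℕ) :
    Integrable (fun ω => f (y t ω)) μ := by
  induction t with
  | zero => simpa only [hy0] using integrable_const (f x₀)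
  | succ t ih =>
    have hinner := (memLp_gradient_comp_of_sub_smul hsmooth hy hy0 hg hstep t).integrable_inner
      (hg t)
    refine integrable_of_le_of_le (hf.continuous.comp_aestronglyMeasurable (hy (t + 1)))
      (ae_of_all _ fun ω => hlb _) (ae_of_all _ fun ω => ?_) (integrable_const (f xstar))
      ((ih.sub (hinner.const_mul γ)).add (((hg t).integrable_norm_pow two_ne_zero).const_mul
        (β / 2 * γ ^ 2)))
    simpa only [hstep, Pi.add_apply, Pi.sub_apply] using
      apply_sub_smul_le hf hsmooth (y t ω) (g t ω) γ

theorem integral_comp_sub_smul_le [IsFiniteMeasure μ] (hf : Differentiable ℝ f)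
    (hsmooth : ∀ x y, ‖gradient f x - gradient f y‖ ≤ β * ‖x - y‖) (hβ : 0 ≤ β)
    {m : MeasurableSpace Ω} (hm : m ≤ m0) {Y G : Ω → E} (hY : StronglyMeasurable[m] Y)
    (hfY : Integrable (fun ω => f (Y ω)) μ) (hfY' : Integrable (fun ω => f (Y ω - γ • G ω)) μ)
    (hgradY : MemLp (fun ω => gradient f (Y ω)) 2 μ)
    (hG : MemLp G 2 μ) (hunbiased : μ[G|m] =ᵐ[μ] fun ω => gradient f (Y ω))
    (hsecond : ∫ ω, ‖G ω‖ ^ 2 ∂μ ≤ σ ^ 2) :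
    ∫ ω, f (Y ω - γ • G ω) ∂μ
      ≤ ∫ ω, f (Y ω) ∂μ - γ * ∫ ω, ‖gradient f (Y ω)‖ ^ 2 ∂μ + β / 2 * γ ^ 2 * σ ^ 2 := by
  have hinner := hgradY.integrable_inner hG
  have hγinner : Integrable (fun ω => γ * ⟪gradient f (Y ω), G ω⟫) μ := hinner.const_mul γ
  have hlinear : Integrable (fun ω => f (Y ω) - γ * ⟪gradient f (Y ω), G ω⟫) μ :=
    hfY.sub hγinner
  have hGsq : Integrable (fun ω => β / 2 * γ ^ 2 * ‖G ω‖ ^ 2) μ :=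
    (hG.integrable_norm_pow two_ne_zero).const_mul _
  have hunbiased_inner : ∫ ω, ⟪gradient f (Y ω), G ω⟫ ∂μ = ∫ ω, ‖gradient f (Y ω)‖ ^ 2 ∂μ := by
    rw [integral_inner_condExp_of_stronglyMeasurable_left hm
      ((continuous_gradient_of_norm_sub_le hsmooth).comp_stronglyMeasurable hY)
      (hG.integrable one_le_two) hinner]
    refine integral_congr_ae ?_
    filter_upwards [hunbiased] with ω hω
    rw [hω, real_inner_self_eq_norm_sq]
  calc ∫ ω, f (Y ω - γ • G ω) ∂μ
      ≤ ∫ ω, f (Y ω) - γ * ⟪gradient f (Y ω), G ω⟫ + β / 2 * γ ^ 2 * ‖G ω‖ ^ 2 ∂μ :=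
        integral_mono hfY' (hlinear.add hGsq) fun ω =>
          apply_sub_smul_le hf hsmooth (Y ω) (G ω) γ
    _ = ∫ ω, f (Y ω) ∂μ - γ * ∫ ω, ‖gradient f (Y ω)‖ ^ 2 ∂μ
          + β / 2 * γ ^ 2 * ∫ ω, ‖G ω‖ ^ 2 ∂μ := by
        rw [integral_add hlinear hGsq, integral_sub hfY hγinner, integral_const_mul,
          integral_const_mul, hunbiased_inner]
    _ ≤ _ := by gcongr

theorem integral_norm_gradient_sq_le [IsFiniteMeasure μ]
    (hsmooth : ∀ x y, ‖gradient f x - gradient f y‖ ≤ β * ‖x - y‖) {c : ℝ} (hc : 0 < c)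
    {X Y : Ω → E} (hgradY : Integrable (fun ω => ‖gradient f (Y ω)‖ ^ 2) μ)
    (hXY : Integrable (fun ω => ‖X ω - Y ω‖ ^ 2) μ) :
    ∫ ω, ‖gradient f (X ω)‖ ^ 2 ∂μ
      ≤ (1 + c) * ∫ ω, ‖gradient f (Y ω)‖ ^ 2 ∂μ
        + (1 + 1 / c) * β ^ 2 * ∫ ω, ‖X ω - Y ω‖ ^ 2 ∂μ := by
  rw [← integral_const_mul, ← integral_const_mul,
    ← integral_add (hgradY.const_mul _) (hXY.const_mul _)]
  exact integral_mono_of_nonneg (ae_of_all _ fun ω => sq_nonneg _)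
    ((hgradY.const_mul _).add (hXY.const_mul _))
    (ae_of_all _ fun ω => norm_gradient_sq_le hsmooth hc (X ω) (Y ω))

theorem mul_sum_integral_norm_gradient_sq_le [IsProbabilityMeasure μ] (hf : Differentiable ℝ f)
    (hsmooth : ∀ x y, ‖gradient f x - gradient f y‖ ≤ β * ‖x - y‖) (hβ : 0 ≤ β) {xstar : E}
    (hlb : ∀ x, f xstar ≤ f x) {ℱ : Filtration ℕ m0} (hy : StronglyAdapted ℱ y)
    (hy0 : ∀ ω, y 0 ω = x₀)
    (hg : ∀ t, MemLp (g t) 2 μ) (hstep : ∀ t ω, y (t + 1) ω = y t ω - γ • g t ω)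
    (hunbiased : ∀ t, μ[g t|ℱ t] =ᵐ[μ] fun ω => gradient f (y t ω))
    (hsecond : ∀ t, ∫ ω, ‖g t ω‖ ^ 2 ∂μ ≤ σ ^ 2) (T : ℕ) :
    γ * ∑ t ∈ range T, ∫ ω, ‖gradient f (y t ω)‖ ^ 2 ∂μ
      ≤ f x₀ - f xstar + T * (β / 2 * γ ^ 2 * σ ^ 2) := by
  have hy' : ∀ t, AEStronglyMeasurable (y t) μ := fun t =>
    ((hy t).mono (ℱ.le t)).aestronglyMeasurable
  have hfy := integrable_comp_of_sub_smul hf hsmooth hlb hy' hy0 hg hstep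
  set a : ℕ → ℝ := fun t => ∫ ω, f (y t ω) ∂μ
  have hdescent : ∀ t, γ * ∫ ω, ‖gradient f (y t ω)‖ ^ 2 ∂μ
      ≤ a t - a (t + 1) + β / 2 * γ ^ 2 * σ ^ 2 := by
    intro t
    have h := integral_comp_sub_smul_le hf hsmooth hβ (ℱ.le t) (hy t) (hfy t)
      (by simpa only [hstep] using hfy (t + 1))
      (memLp_gradient_comp_of_sub_smul hsmooth hy' hy0 hg hstep t) (hg t) (hunbiased t)
      (hsecond t)
    simp only [a, hstep]
    linarith
  have ha0 : a 0 = f x₀ := by simp [a, hy0]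
  have haT : f xstar ≤ a T := by
    simpa using integral_mono (integrable_const _) (hfy T) fun ω => hlb (y T ω)
  calc γ * ∑ t ∈ range T, ∫ ω, ‖gradient f (y t ω)‖ ^ 2 ∂μ
      ≤ ∑ t ∈ range T, (a t - a (t + 1) + β / 2 * γ ^ 2 * σ ^ 2) := by
        rw [mul_sum]
        exact sum_le_sum fun t _ => hdescent t
    _ = a 0 - a T + T * (β / 2 * γ ^ 2 * σ ^ 2) := by
        rw [sum_add_distrib, sum_range_sub', sum_const, card_range, nsmul_eq_mul]
    _ ≤ f x₀ - f xstar + T * (β / 2 * γ ^ 2 * σ ^ 2) := by linarith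

end SGD

/-- Convergence of RSGD: for β-smooth `R_S` bounded below by `R_S x_*`,
adapted sequences `x t`, `r t` with `x 0 = x0` deterministic and `r 0 = 0`, unbiased
stochastic gradients `g t` at the reference points `x t - r t` with second moment bounded by
σ², and the reference-trajectory relation
`x (t+1) - r (t+1) = (x t - r t) - γ • g t` with `0 < γ ≤ 1/β`, for every `c₁ > 0`, `T ≥ 1`:
`min_{0 ≤ t < T} E‖∇R_S(x t)‖² ≤ (1+c₁)(R_S(x0) - R_S(x_*))/(γT) + (1+c₁)βγσ²/2
  + (1 + 1/c₁) β² (∑_{t<T} E‖r t‖²)/T`. -/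
theorem rsgd_convergence
    {d : ℕ} (RS : EuclideanSpace ℝ (Fin d) → ℝ) (β σ γ : ℝ)
    (xstar x0 : EuclideanSpace ℝ (Fin d))
    (hβ : 0 < β)
    (hdiff : Differentiable ℝ RS)
    (hsmooth : ∀ x y, ‖gradient RS x - gradient RS y‖ ≤ β * ‖x - y‖)
    (hlb : ∀ x, RS xstar ≤ RS x)
    {Ω : Type*} {m0 : MeasurableSpace Ω} {μ : Measure Ω} [IsProbabilityMeasure μ]
    (ℱ : Filtration ℕ m0)
    (x r g : ℕ → Ω → EuclideanSpace ℝ (Fin d))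
    (hxadapted : Adapted ℱ x) (hradapted : Adapted ℱ r)
    (hx0 : ∀ ω, x 0 ω = x0) (hr0 : ∀ ω, r 0 ω = 0)
    (hgint : ∀ t, Integrable (g t) μ)
    (hgsqint : ∀ t, Integrable (fun ω => ‖g t ω‖ ^ 2) μ)
    (hrsqint : ∀ t, Integrable (fun ω => ‖r t ω‖ ^ 2) μ)
    (hunbiased : ∀ t, μ[g t | ℱ t] =ᵐ[μ] fun ω => gradient RS (x t ω - r t ω))
    (hsecond : ∀ t, ∫ ω, ‖g t ω‖ ^ 2 ∂μ ≤ σ ^ 2)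
    (hreference : ∀ t ω, x (t + 1) ω - r (t + 1) ω = (x t ω - r t ω) - γ • g t ω)
    (hγ0 : 0 < γ)
    (c₁ : ℝ) (hc₁ : 0 < c₁) (T : ℕ) (hT : 1 ≤ T) :
    (Finset.range T).inf' (Finset.nonempty_range_iff.mpr (by omega))
        (fun t => ∫ ω, ‖gradient RS (x t ω)‖ ^ 2 ∂μ)
      ≤ (1 + c₁) * (RS x0 - RS xstar) / (γ * T) + (1 + c₁) * β * γ * σ ^ 2 / 2
        + (1 + 1 / c₁) * β ^ 2 * (∑ t ∈ Finset.range T, ∫ ω, ‖r t ω‖ ^ 2 ∂μ) / T := by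
  set y : ℕ → Ω → EuclideanSpace ℝ (Fin d) := fun t ω => x t ω - r t ω
  have hy : StronglyAdapted ℱ y := fun t => ((hxadapted t).sub (hradapted t)).stronglyMeasurable
  have hy0 : ∀ ω, y 0 ω = x0 := fun ω => by simp [y, hx0, hr0]
  have hg : ∀ t, MemLp (g t) 2 μ := fun t =>
    (memLp_two_iff_integrable_sq_norm (hgint t).aestronglyMeasurable).2 (hgsqint t)
  have hdescent := mul_sum_integral_norm_gradient_sq_le hdiff hsmooth hβ.le hlb hy hy0 hg
    hreference hunbiased hsecond T
  have hgrad := memLp_gradient_comp_of_sub_smul hsmooth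
    (fun t => ((hy t).mono (ℱ.le t)).aestronglyMeasurable) hy0 hg hreference
  have hcompare : ∀ t, ∫ ω, ‖gradient RS (x t ω)‖ ^ 2 ∂μ
      ≤ (1 + c₁) * ∫ ω, ‖gradient RS (y t ω)‖ ^ 2 ∂μ
        + (1 + 1 / c₁) * β ^ 2 * ∫ ω, ‖r t ω‖ ^ 2 ∂μ := fun t => by
    simpa only [y, sub_sub_cancel] using integral_norm_gradient_sq_le hsmooth hc₁ (X := x t)
      ((hgrad t).integrable_norm_pow two_ne_zero)
      (by simpa only [y, sub_sub_cancel] using hrsqint t)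
  have hT' : (T : ℝ) ≠ 0 := Nat.cast_ne_zero.2 (by omega)
  apply inf'_le_of_sum_le_card_mul
  calc ∑ t ∈ range T, ∫ ω, ‖gradient RS (x t ω)‖ ^ 2 ∂μ
      ≤ ∑ t ∈ range T, ((1 + c₁) * ∫ ω, ‖gradient RS (y t ω)‖ ^ 2 ∂μ
          + (1 + 1 / c₁) * β ^ 2 * ∫ ω, ‖r t ω‖ ^ 2 ∂μ) := sum_le_sum fun t _ => hcompare t
    _ ≤ (1 + c₁) * ((RS x0 - RS xstar + T * (β / 2 * γ ^ 2 * σ ^ 2)) / γ)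
          + (1 + 1 / c₁) * β ^ 2 * ∑ t ∈ range T, ∫ ω, ‖r t ω‖ ^ 2 ∂μ := by
        rw [sum_add_distrib, ← mul_sum, ← mul_sum]
        gcongr
        rw [le_div_iff₀ hγ0]
        linarith
    _ = _ := by
        rw [card_range]
        field_simp
end

section
/- (Co-coercivity) Let E be a real inner product space and f : E → ℝ convex and differentiable with β-Lipschitz gradient (β > 0). Then for all x, y ∈ E, ⟨∇f(x) − ∇f(y), x − y⟩ ≥ (1/β)·‖∇f(x) − ∇f(y)‖². -/
open scoped RealInnerProductSpace

/-!
Co-coercivity comes from combining the two first-order bounds for a convex `β`-smooth `f`: the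
tangent plane lies below `f`, and `f` lies below the tangent plane plus `β/2 ‖·‖²`. Comparing them
at the gradient step `z = y - (∇f y - ∇f x) / β` gives
`f x + ⟪∇f x, y - x⟫ + ‖∇f y - ∇f x‖² / (2β) ≤ f y`, and adding this to the same inequality with
`x` and `y` exchanged gives the claim.
-/

open Set AffineMap

section

variable {E : Type*} [NormedAddCommGroup E] [InnerProductSpace ℝ E] [CompleteSpace E]
  {f : E → ℝ}

theorem HasGradientAt.hasDerivAt_comp_lineMap {x y g : E} {t : ℝ}
    (hf : HasGradientAt f g (lineMap x y t)) :
    HasDerivAt (f ∘ lineMap x y) ⟪g, y - x⟫ t := by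
  have := (hasGradientAt_iff_hasFDerivAt.mp hf).comp_hasDerivAt t hasDerivAt_lineMap
  simp only [InnerProductSpace.toDual_apply_apply] at this
  exact this

theorem ConvexOn.add_inner_sub_le_of_hasGradientAt {s : Set E} {x y g : E}
    (hf : ConvexOn ℝ s f) (hx : x ∈ s) (hy : y ∈ s) (hg : HasGradientAt f g x) :
    f x + ⟪g, y - x⟫ ≤ f y := by
  have hslope := (hf.comp_affineMap (lineMap x y)).le_slope_of_hasDerivAt (x := 0) (y := 1)
    (by simpa using hx) (by simpa using hy) one_pos
    (HasGradientAt.hasDerivAt_comp_lineMap (by simpa using hg))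
  simp only [slope_def_field, Function.comp_apply, lineMap_apply_zero, lineMap_apply_one,
    sub_zero, div_one] at hslope
  linarith

theorem inner_gradient_lineMap_sub_le {β : ℝ}
    (hsmooth : ∀ x y, ‖gradient f x - gradient f y‖ ≤ β * ‖x - y‖) (x y : E) {t : ℝ}
    (ht : 0 ≤ t) :
    ⟪gradient f (lineMap x y t) - gradient f x, y - x⟫ ≤ β * t * ‖y - x‖ ^ 2 :=
  calc ⟪gradient f (lineMap x y t) - gradient f x, y - x⟫
      ≤ ‖gradient f (lineMap x y t) - gradient f x‖ * ‖y - x‖ := real_inner_le_norm _ _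
    _ ≤ β * ‖lineMap x y t - x‖ * ‖y - x‖ := by gcongr; exact hsmooth _ _
    _ = β * t * ‖y - x‖ ^ 2 := by
      rw [← dist_eq_norm, dist_lineMap_left, Real.norm_of_nonneg ht, dist_eq_norm']
      ring

theorem le_add_inner_sub_add_of_lipschitz_gradient {β : ℝ} (hdiff : Differentiable ℝ f)
    (hsmooth : ∀ x y, ‖gradient f x - gradient f y‖ ≤ β * ‖x - y‖) (x y : E) :
    f y ≤ f x + ⟪gradient f x, y - x⟫ + β / 2 * ‖y - x‖ ^ 2 := by
  have hderiv (t : ℝ) : HasDerivAt (fun t => f (lineMap x y t) - t * ⟪gradient f x, y - x⟫)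
      (⟪gradient f (lineMap x y t) - gradient f x, y - x⟫) t := by
    rw [inner_sub_left]
    exact ((hdiff _).hasGradientAt.hasDerivAt_comp_lineMap).sub
      ((hasDerivAt_id t).mul_const _ |>.congr_deriv (one_mul _))
  have hbound (t : ℝ) : HasDerivAt (fun t => f x + β / 2 * ‖y - x‖ ^ 2 * t ^ 2)
      (β * t * ‖y - x‖ ^ 2) t := by
    refine (((hasDerivAt_pow 2 t).const_mul (β / 2 * ‖y - x‖ ^ 2)).const_add
      (f x)).congr_deriv ?_
    push_cast
    ring
  have h01 := image_le_of_deriv_right_le_deriv_boundary (a := 0) (b := 1)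
    (fun t _ => (hderiv t).continuousAt.continuousWithinAt)
    (fun t _ => (hderiv t).hasDerivWithinAt) (by simp)
    (fun t _ => (hbound t).continuousAt.continuousWithinAt)
    (fun t _ => (hbound t).hasDerivWithinAt)
    (fun t ht => inner_gradient_lineMap_sub_le hsmooth x y ht.1)
    (right_mem_Icc.2 zero_le_one)
  simp only [lineMap_apply_one, one_mul, one_pow, mul_one] at h01
  linarith

theorem ConvexOn.add_inner_sub_add_sq_norm_gradient_sub_div_le {β : ℝ} (hβ : 0 < β)
    (hconv : ConvexOn ℝ univ f) (hdiff : Differentiable ℝ f)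
    (hsmooth : ∀ x y, ‖gradient f x - gradient f y‖ ≤ β * ‖x - y‖) (x y : E) :
    f x + ⟪gradient f x, y - x⟫ + ‖gradient f y - gradient f x‖ ^ 2 / (2 * β) ≤ f y := by
  set u := gradient f y - gradient f x
  set z := y - β⁻¹ • u
  have hlower := hconv.add_inner_sub_le_of_hasGradientAt (mem_univ x) (mem_univ z)
    (hdiff x).hasGradientAt
  have hupper := le_add_inner_sub_add_of_lipschitz_gradient hdiff hsmooth y z
  have hzy : z - y = -(β⁻¹ • u) := by simp [z]
  have hzx : z - x = (y - x) - β⁻¹ • u := by simp only [z]; abel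
  have hgy : gradient f y = gradient f x + u := by simp [u]
  rw [hzy, norm_neg, norm_smul, Real.norm_of_nonneg (inv_nonneg.2 hβ.le), hgy, inner_neg_right,
    inner_smul_right, inner_add_left, real_inner_self_eq_norm_sq] at hupper
  rw [hzx, inner_sub_right, inner_smul_right] at hlower
  have hquad : β / 2 * (β⁻¹ * ‖u‖) ^ 2 = ‖u‖ ^ 2 / (2 * β) := by field_simp
  have hhalf : β⁻¹ * ‖u‖ ^ 2 = ‖u‖ ^ 2 / (2 * β) + ‖u‖ ^ 2 / (2 * β) := by field_simp; ring
  linarith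

end

/-- Co-coercivity: for a convex differentiable `f` with β-Lipschitz gradient
(β > 0) on a real inner product space,
`⟪∇f(x) - ∇f(y), x - y⟫ ≥ (1/β) ‖∇f(x) - ∇f(y)‖²`. -/
theorem cocoercivity_of_convex_smooth
    {E : Type*} [NormedAddCommGroup E] [InnerProductSpace ℝ E] [CompleteSpace E]
    (f : E → ℝ) (β : ℝ) (hβ : 0 < β)
    (hconv : ConvexOn ℝ Set.univ f)
    (hdiff : Differentiable ℝ f)
    (hsmooth : ∀ x y, ‖gradient f x - gradient f y‖ ≤ β * ‖x - y‖) :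
    ∀ x y : E, (1 / β) * ‖gradient f x - gradient f y‖ ^ 2
        ≤ ⟪gradient f x - gradient f y, x - y⟫ := by
  intro x y
  have hxy := hconv.add_inner_sub_add_sq_norm_gradient_sub_div_le hβ hdiff hsmooth x y
  have hyx := hconv.add_inner_sub_add_sq_norm_gradient_sub_div_le hβ hdiff hsmooth y x
  rw [norm_sub_rev] at hxy
  have hhalf : 1 / β * ‖gradient f x - gradient f y‖ ^ 2 =
      ‖gradient f x - gradient f y‖ ^ 2 / (2 * β) * 2 := by field_simp
  simp only [inner_sub_left, inner_sub_right] at hxy hyx ⊢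
  linarith
end

section
/- (Convex generalization error of RSGD-scale) Let Z be a measurable space and f : ℝ^d × Z → ℝ be such that for every z ∈ Z, f(·, z) is convex, differentiable with β-Lipschitz gradient, and has ‖∇f(x, z)‖ ≤ L for all x. Let S = (z_1, …, z_N) and S' = (z'_1, …, z'_N) be two datasets in Z^N differing in exactly one entry. Let i_0, …, i_{T−1} be i.i.d. random indices uniform on {1, …, N}, and run RSGD-scale with scaling factor α ∈ (0,1), learning rates γ_t satisfying 0 < γ_t ≤ 2/β, the same initialization x_0 = x'_0, r_0 = r'_0 = 0, and the same index sequence on both datasets: x_{t+1} = x_t − α·(r_t + γ_t·∇f(x_t − r_t, z_{i_t})), r_{t+1} = (1−α)·(r_t + γ_t·∇f(x_t − r_t, z_{i_t})), and analogously for x'_t, r'_t with samples from S'. Then E‖x_T − x'_T‖ ≤ (2L/N)·∑_{t=0}^{T−1} (1 − (1−α)^{T−t})·γ_t, and consequently for every z ∈ Z, E[f(x_T, z) − f(x'_T, z)] ≤ (2L²/N)·∑_{t=0}^{T−1} (1 − (1−α)^{T−t})·γ_t. -/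
/-!
The reference points `u t = x t - r t` follow plain SGD, and `x (t + 1) = (1 - α) x t + α u (t + 1)`
is an exponential moving average of them. The gradient of a convex `β`-smooth function is
co-coercive, so a gradient step of size at most `2 / β` is nonexpansive: the two reference
trajectories drift apart only at the steps where the differing sample is drawn, by at most
`2 L γ t`, and this happens with probability `1 / N`. Unrolling the moving average produces the
weights `1 - (1 - α) ^ (T - t)`; the loss bound follows because each `f (·, z)` is `L`-Lipschitz.
-/

open MeasureTheory ProbabilityTheory RealInnerProductSpace Set

section GradientStep

variable {E : Type*} [NormedAddCommGroup E] [InnerProductSpace ℝ E] [CompleteSpace E]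
  {g : E → ℝ} {β : ℝ}

lemma hasDerivAt_apply_add_smul {x h : E} {t : ℝ} (hg : DifferentiableAt ℝ g (x + t • h)) :
    HasDerivAt (fun s : ℝ => g (x + s • h)) ⟪gradient g (x + t • h), h⟫ t := by
  have hline : HasDerivAt (fun s : ℝ => x + s • h) h t := by
    simpa using ((hasDerivAt_id t).smul_const h).const_add x
  exact hg.hasGradientAt.hasFDerivAt.comp_hasDerivAt t hline

lemma ConvexOn.add_inner_gradient_le {x : E} (hc : ConvexOn ℝ univ g) (hg : DifferentiableAt ℝ g x)
    (y : E) : g x + ⟪gradient g x, y - x⟫ ≤ g y := by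
  have hline : ConvexOn ℝ univ fun s : ℝ => g (x + s • (y - x)) := by
    simpa [Function.comp_def, AffineMap.lineMap_apply, add_comm] using
      hc.comp_affineMap (AffineMap.lineMap x y)
  have hderiv := hasDerivAt_apply_add_smul (x := x) (h := y - x) (t := 0) (by simpa using hg)
  have := hline.le_slope_of_hasDerivAt (mem_univ 0) (mem_univ 1) one_pos hderiv
  simp only [slope_def_field, zero_smul, add_zero, one_smul, add_sub_cancel] at this
  linarith

lemma apply_add_le_of_norm_gradient_sub_le (hg : Differentiable ℝ g)
    (hsm : ∀ a b, ‖gradient g a - gradient g b‖ ≤ β * ‖a - b‖) (x h : E) :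
    g (x + h) ≤ g x + ⟪gradient g x, h⟫ + β / 2 * ‖h‖ ^ 2 := by
  set ψ : ℝ → ℝ := fun t => g (x + t • h) - t * ⟪gradient g x, h⟫ - β / 2 * t ^ 2 * ‖h‖ ^ 2
  have hψ : ∀ t, HasDerivAt ψ (⟪gradient g (x + t • h) - gradient g x, h⟫ - β * t * ‖h‖ ^ 2) t := by
    intro t
    have := ((hasDerivAt_apply_add_smul (x := x) (h := h) (hg _)).sub ((hasDerivAt_id t).mul_const
      ⟪gradient g x, h⟫)).sub (((hasDerivAt_pow 2 t).const_mul (β / 2)).mul_const (‖h‖ ^ 2))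
    refine this.congr_deriv ?_
    rw [inner_sub_left]
    ring
  have hanti : AntitoneOn ψ (Icc 0 1) := by
    refine antitoneOn_of_deriv_nonpos (convex_Icc 0 1)
      (HasDerivAt.continuousOn fun t _ => hψ t)
      (fun t _ => (hψ t).differentiableAt.differentiableWithinAt) fun t ht => ?_
    rw [interior_Icc] at ht
    rw [(hψ t).deriv, sub_nonpos]
    calc ⟪gradient g (x + t • h) - gradient g x, h⟫
        ≤ ‖gradient g (x + t • h) - gradient g x‖ * ‖h‖ := real_inner_le_norm _ _
      _ ≤ β * ‖x + t • h - x‖ * ‖h‖ := by gcongr; exact hsm _ _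
      _ = β * t * ‖h‖ ^ 2 := by
        rw [add_sub_cancel_left, norm_smul, Real.norm_of_nonneg ht.1.le]
        ring
  have := hanti (left_mem_Icc.2 zero_le_one) (right_mem_Icc.2 zero_le_one) zero_le_one
  simp only [ψ, zero_smul, add_zero, one_smul] at this
  linarith

lemma ConvexOn.norm_gradient_sub_sq_le (hc : ConvexOn ℝ univ g) (hg : Differentiable ℝ g)
    (hβ : 0 < β) (hsm : ∀ a b, ‖gradient g a - gradient g b‖ ≤ β * ‖a - b‖) (x y : E) :
    ‖gradient g y - gradient g x‖ ^ 2 ≤ 2 * β * (g y - g x - ⟪gradient g x, y - x⟫) := by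
  set v := gradient g y - gradient g x
  -- compare `g` at `y - v / β` with its tangent plane at `x` and its upper quadratic model at `y`
  have hlow := hc.add_inner_gradient_le (hg x) (y - β⁻¹ • v)
  have hup := apply_add_le_of_norm_gradient_sub_le hg hsm y (-(β⁻¹ • v))
  rw [← sub_eq_add_neg] at hup
  rw [sub_right_comm, inner_sub_right, real_inner_smul_right] at hlow
  rw [inner_neg_right, real_inner_smul_right, norm_neg, norm_smul,
    Real.norm_of_nonneg (inv_nonneg.2 hβ.le)] at hup
  have hv : ⟪gradient g y, v⟫ - ⟪gradient g x, v⟫ = ‖v‖ ^ 2 := by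
    rw [← inner_sub_left, real_inner_self_eq_norm_sq]
  have hβ' : β ≠ 0 := hβ.ne'
  calc ‖v‖ ^ 2
      = 2 * β * (β⁻¹ * (⟪gradient g y, v⟫ - ⟪gradient g x, v⟫) - β / 2 * (β⁻¹ * ‖v‖) ^ 2) := by
        rw [hv]; field_simp; ring
    _ ≤ _ := mul_le_mul_of_nonneg_left (by linarith) (by positivity)

lemma ConvexOn.norm_gradient_sub_sq_le_inner (hc : ConvexOn ℝ univ g)
    (hg : Differentiable ℝ g) (hβ : 0 < β)
    (hsm : ∀ a b, ‖gradient g a - gradient g b‖ ≤ β * ‖a - b‖) (x y : E) :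
    ‖gradient g x - gradient g y‖ ^ 2 ≤ β * ⟪gradient g x - gradient g y, x - y⟫ := by
  have hxy := hc.norm_gradient_sub_sq_le hg hβ hsm x y
  have hyx := hc.norm_gradient_sub_sq_le hg hβ hsm y x
  have hinner : ⟪gradient g x - gradient g y, x - y⟫
      = -⟪gradient g x, y - x⟫ - ⟪gradient g y, x - y⟫ := by
    rw [inner_sub_left, ← inner_neg_right, neg_sub]
  rw [norm_sub_rev] at hxy
  linear_combination (hxy + hyx) / 2 - β * hinner

lemma ConvexOn.norm_sub_smul_gradient_sub_le (hc : ConvexOn ℝ univ g)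
    (hg : Differentiable ℝ g) (hβ : 0 < β)
    (hsm : ∀ a b, ‖gradient g a - gradient g b‖ ≤ β * ‖a - b‖) {γ : ℝ} (hγ0 : 0 ≤ γ)
    (hγβ : γ ≤ 2 / β) (u v : E) :
    ‖(u - γ • gradient g u) - (v - γ • gradient g v)‖ ≤ ‖u - v‖ := by
  set d := gradient g u - gradient g v
  have hco := hc.norm_gradient_sub_sq_le_inner hg hβ hsm u v
  have hγβ' : γ * β ≤ 2 := by rwa [le_div_iff₀ hβ] at hγβ
  have hsq : ‖(u - γ • gradient g u) - (v - γ • gradient g v)‖ ^ 2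
      = ‖u - v‖ ^ 2 - 2 * γ * ⟪d, u - v⟫ + γ ^ 2 * ‖d‖ ^ 2 := by
    rw [show (u - γ • gradient g u) - (v - γ • gradient g v) = (u - v) - γ • d by
      simp only [d, smul_sub]; abel, norm_sub_sq_real, real_inner_smul_right, norm_smul,
      Real.norm_of_nonneg hγ0, real_inner_comm]
    ring
  refine pow_le_pow_iff_left₀ (norm_nonneg _) (norm_nonneg _) two_ne_zero |>.1 ?_
  rw [hsq]
  nlinarith [mul_le_mul_of_nonneg_left hco (sq_nonneg γ), mul_nonneg hγ0 (sq_nonneg ‖d‖)]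

lemma norm_sub_le_of_norm_gradient_le {L : ℝ} (hg : Differentiable ℝ g)
    (hL : ∀ x, ‖gradient g x‖ ≤ L) (a b : E) : ‖g a - g b‖ ≤ L * ‖a - b‖ :=
  convex_univ.norm_image_sub_le_of_norm_fderiv_le (fun w _ => hg w)
    (fun w _ => by rw [← toDual_gradient, LinearIsometryEquiv.norm_map]; exact hL w)
    (mem_univ b) (mem_univ a)

end GradientStep

lemma norm_sub_smul_sub_sub_smul_le {E : Type*} [NormedAddCommGroup E] [NormedSpace ℝ E]
    {G G' : E → E} {L γ : ℝ} (hG : ∀ x, ‖G x‖ ≤ L) (hG' : ∀ x, ‖G' x‖ ≤ L) (hγ : 0 ≤ γ)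
    (u v : E) : ‖(u - γ • G u) - (v - γ • G' v)‖ ≤ ‖u - v‖ + 2 * L * γ :=
  calc ‖(u - γ • G u) - (v - γ • G' v)‖ = ‖(u - v) - γ • (G u - G' v)‖ := by
        rw [smul_sub]; congr 1; abel
    _ ≤ ‖u - v‖ + γ * (‖G u‖ + ‖G' v‖) := by
        grw [norm_sub_le (u - v), norm_smul, Real.norm_of_nonneg hγ, norm_sub_le (G u)]
    _ ≤ ‖u - v‖ + 2 * L * γ := by nlinarith [hG u, hG' v]

lemma le_sum_range_of_le_add {a b : ℕ → ℝ} (h0 : a 0 ≤ 0) (h : ∀ t, a (t + 1) ≤ a t + b t)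
    (n : ℕ) : a n ≤ ∑ t ∈ Finset.range n, b t := by
  induction n with
  | zero => simpa using h0
  | succ n ih => rw [Finset.sum_range_succ]; linarith [h n]

lemma sum_range_succ_one_sub_pow_mul (c : ℝ) (b : ℕ → ℝ) (n : ℕ) :
    ∑ t ∈ Finset.range (n + 1), (1 - c ^ (n + 1 - t)) * b t
      = c * ∑ t ∈ Finset.range n, (1 - c ^ (n - t)) * b t
        + (1 - c) * ∑ t ∈ Finset.range (n + 1), b t := by
  rw [Finset.sum_range_succ, Finset.sum_range_succ, Finset.mul_sum, mul_add, Finset.mul_sum,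
    ← add_assoc, ← Finset.sum_add_distrib, Nat.add_sub_cancel_left, pow_one]
  congr 1
  refine Finset.sum_congr rfl fun t ht => ?_
  rw [Nat.sub_add_comm (Finset.mem_range.1 ht).le, pow_succ]
  ring

lemma le_sum_range_one_sub_pow_mul {D δ b : ℕ → ℝ} {α : ℝ} (hα0 : 0 ≤ α) (hα1 : α ≤ 1)
    (hD0 : D 0 ≤ 0) (hD : ∀ t, D (t + 1) ≤ (1 - α) * D t + α * δ (t + 1))
    (hδ : ∀ t, δ t ≤ ∑ s ∈ Finset.range t, b s) (n : ℕ) :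
    D n ≤ ∑ t ∈ Finset.range n, (1 - (1 - α) ^ (n - t)) * b t := by
  induction n with
  | zero => simpa using hD0
  | succ n ih =>
    rw [sum_range_succ_one_sub_pow_mul, sub_sub_cancel]
    calc D (n + 1) ≤ (1 - α) * D n + α * δ (n + 1) := hD n
      _ ≤ _ := add_le_add (mul_le_mul_of_nonneg_left ih (by linarith))
        (mul_le_mul_of_nonneg_left (hδ _) hα0)

section RSGDScale

variable {Ω E : Type*} [NormedAddCommGroup E] [NormedSpace ℝ E]

/-- `G t ω` is the stochastic gradient used at step `t` on the sample path `ω`. -/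
structure IsRSGDScaleRun (G : ℕ → Ω → E → E) (α : ℝ) (γ : ℕ → ℝ) (x₀ : E)
    (x r : ℕ → Ω → E) : Prop where
  x_zero : ∀ ω, x 0 ω = x₀
  r_zero : ∀ ω, r 0 ω = 0
  x_succ : ∀ t ω, x (t + 1) ω = x t ω - α • (r t ω + γ t • G t ω (x t ω - r t ω))
  r_succ : ∀ t ω, r (t + 1) ω = (1 - α) • (r t ω + γ t • G t ω (x t ω - r t ω))

namespace IsRSGDScaleRun

variable {G G' : ℕ → Ω → E → E} {α : ℝ} {γ : ℕ → ℝ} {x₀ : E} {x r x' r' : ℕ → Ω → E}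

lemma sub_succ (h : IsRSGDScaleRun G α γ x₀ x r) (t : ℕ) (ω : Ω) :
    x (t + 1) ω - r (t + 1) ω = (x t ω - r t ω) - γ t • G t ω (x t ω - r t ω) := by
  rw [h.x_succ, h.r_succ]
  module

lemma x_succ_eq (h : IsRSGDScaleRun G α γ x₀ x r) (t : ℕ) (ω : Ω) :
    x (t + 1) ω = (1 - α) • x t ω + α • (x (t + 1) ω - r (t + 1) ω) := by
  rw [h.sub_succ, h.x_succ]
  module

lemma measurable [MeasurableSpace Ω] [MeasurableSpace E] [BorelSpace E]
    [SecondCountableTopology E] (h : IsRSGDScaleRun G α γ x₀ x r)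
    (hG : ∀ t (w : Ω → E), Measurable w → Measurable fun ω => G t ω (w ω)) (t : ℕ) :
    Measurable (x t) ∧ Measurable (r t) := by
  induction t with
  | zero =>
    rw [funext h.x_zero, funext h.r_zero]
    exact ⟨measurable_const, measurable_const⟩
  | succ t ih =>
    have hstep := ih.2.add ((hG t _ (ih.1.sub ih.2)).const_smul (γ t))
    rw [funext (h.x_succ t), funext (h.r_succ t)]
    exact ⟨ih.1.sub (hstep.const_smul α), hstep.const_smul (1 - α)⟩

lemma norm_sub_le_sum (h : IsRSGDScaleRun G α γ x₀ x r) (h' : IsRSGDScaleRun G' α γ x₀ x' r')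
    (hα0 : 0 ≤ α) (hα1 : α ≤ 1) {b : ℕ → Ω → ℝ}
    (hstep : ∀ t ω u v, ‖(u - γ t • G t ω u) - (v - γ t • G' t ω v)‖ ≤ ‖u - v‖ + b t ω)
    (T : ℕ) (ω : Ω) :
    ‖x T ω - x' T ω‖ ≤ ∑ t ∈ Finset.range T, (1 - (1 - α) ^ (T - t)) * b t ω := by
  have hδ : ∀ t, ‖(x t ω - r t ω) - (x' t ω - r' t ω)‖ ≤ ∑ s ∈ Finset.range t, b s ω :=
    le_sum_range_of_le_add (a := fun t => ‖(x t ω - r t ω) - (x' t ω - r' t ω)‖)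
      (by simp [h.x_zero, h'.x_zero, h.r_zero, h'.r_zero]) fun t => by
        rw [h.sub_succ, h'.sub_succ]
        exact hstep _ _ _ _
  refine le_sum_range_one_sub_pow_mul (D := fun t => ‖x t ω - x' t ω‖) hα0 hα1
    (by simp [h.x_zero, h'.x_zero]) (fun t => ?_) hδ T
  calc ‖x (t + 1) ω - x' (t + 1) ω‖ = ‖(1 - α) • (x t ω - x' t ω)
        + α • ((x (t + 1) ω - r (t + 1) ω) - (x' (t + 1) ω - r' (t + 1) ω))‖ := by
        conv_lhs => rw [h.x_succ_eq t ω, h'.x_succ_eq t ω]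
        congr 1
        module
    _ ≤ _ := by
      grw [norm_add_le, norm_smul, norm_smul, Real.norm_of_nonneg (by linarith),
        Real.norm_of_nonneg hα0]

end IsRSGDScaleRun

end RSGDScale

lemma Measurable.apply_of_countable_index {Ω ι β γ : Type*} [MeasurableSpace Ω]
    [MeasurableSpace ι] [Countable ι] [MeasurableSingletonClass ι] [MeasurableSpace β]
    [MeasurableSpace γ] {I : Ω → ι} {w : Ω → β} {F : ι → β → γ} (hI : Measurable I)
    (hw : Measurable w) (hF : ∀ k, Measurable (F k)) : Measurable fun ω => F (I ω) (w ω) :=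
  (measurable_from_prod_countable_right (f := fun p : ι × β => F p.1 p.2) hF).comp (hI.prodMk hw)

section Expectation

variable {Ω : Type*} [MeasurableSpace Ω] {μ : Measure Ω} {ι : Type*} {s : Finset ι}
  {A : ι → Set Ω} {N : ℕ}

lemma integrable_sum_mul_indicator [IsFiniteMeasure μ] (hA : ∀ i, MeasurableSet (A i))
    (w v : ι → ℝ) (c : ℝ) :
    Integrable (fun ω => ∑ i ∈ s, w i * (A i).indicator (fun _ => c * v i) ω) μ :=
  integrable_finsetSum _ fun i _ =>
    ((integrable_const (c * v i)).indicator (hA i)).const_mul (w i)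

lemma integral_sum_mul_indicator [IsFiniteMeasure μ] (hA : ∀ i, MeasurableSet (A i))
    (hμA : ∀ i, μ (A i) = (N : ENNReal)⁻¹) (w v : ι → ℝ) (c : ℝ) :
    ∫ ω, ∑ i ∈ s, w i * (A i).indicator (fun _ => c * v i) ω ∂μ
      = c / N * ∑ i ∈ s, w i * v i := by
  rw [integral_finsetSum _ fun i _ =>
    ((integrable_const (c * v i)).indicator (hA i)).const_mul (w i), Finset.mul_sum]
  refine Finset.sum_congr rfl fun i _ => ?_
  rw [integral_const_mul, integral_indicator_const _ (hA i), measureReal_def, hμA,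
    ENNReal.toReal_inv, ENNReal.toReal_natCast, smul_eq_mul]
  ring

lemma integrable_and_integral_le_of_le_sum_mul_indicator [IsFiniteMeasure μ] {X : Ω → ℝ}
    (hX : AEStronglyMeasurable X μ) (hX0 : ∀ ω, 0 ≤ X ω) (hA : ∀ i, MeasurableSet (A i))
    (hμA : ∀ i, μ (A i) = (N : ENNReal)⁻¹) {w v : ι → ℝ} {c : ℝ}
    (hXle : ∀ ω, X ω ≤ ∑ i ∈ s, w i * (A i).indicator (fun _ => c * v i) ω) :
    Integrable X μ ∧ ∫ ω, X ω ∂μ ≤ c / N * ∑ i ∈ s, w i * v i := by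
  have hint : Integrable X μ := (integrable_sum_mul_indicator hA w v c).mono' hX
    (ae_of_all _ fun ω => by simpa [abs_of_nonneg (hX0 ω)] using hXle ω)
  refine ⟨hint, ?_⟩
  rw [← integral_sum_mul_indicator hA hμA]
  exact integral_mono hint (integrable_sum_mul_indicator hA w v c) hXle

lemma integral_sub_le_mul_integral_norm_sub {E : Type*} [NormedAddCommGroup E] {g : E → ℝ}
    {L : ℝ} (hgc : Continuous g) (hg : ∀ a b, ‖g a - g b‖ ≤ L * ‖a - b‖) {X Y : Ω → E}
    (hX : AEStronglyMeasurable X μ) (hY : AEStronglyMeasurable Y μ)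
    (hXY : Integrable (fun ω => ‖X ω - Y ω‖) μ) :
    ∫ ω, (g (X ω) - g (Y ω)) ∂μ ≤ L * ∫ ω, ‖X ω - Y ω‖ ∂μ := by
  have hint : Integrable (fun ω => g (X ω) - g (Y ω)) μ :=
    (hXY.const_mul L).mono' ((hgc.comp_aestronglyMeasurable hX).sub
      (hgc.comp_aestronglyMeasurable hY)) (ae_of_all _ fun ω => hg _ _)
  rw [← integral_const_mul]
  exact integral_mono hint (hXY.const_mul L) fun ω => (le_abs_self _).trans (hg _ _)

end Expectation

theorem rsgd_scale_convex_stability_general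
    {d N : ℕ}
    {Z : Type*} [MeasurableSpace Z]
    (f : EuclideanSpace ℝ (Fin d) → Z → ℝ) (β L : ℝ) (hβ : 0 < β)
    (hconv : ∀ z, ConvexOn ℝ Set.univ (f · z))
    (hdiff : ∀ z, Differentiable ℝ (f · z))
    (hsmooth : ∀ z x y, ‖gradient (f · z) x - gradient (f · z) y‖ ≤ β * ‖x - y‖)
    (hlip : ∀ z x, ‖gradient (f · z) x‖ ≤ L)
    (z z' : Fin N → Z) (i₀ : Fin N)
    (hdiff_one : ∀ j, j ≠ i₀ → z j = z' j)
    {Ω : Type*} {m0 : MeasurableSpace Ω} (μ : Measure Ω) [IsProbabilityMeasure μ]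
    (idx : ℕ → Ω → Fin N)
    (hidx_meas : ∀ t, Measurable (idx t))
    (hidx_unif : ∀ t k, μ {ω | idx t ω = k} = (N : ENNReal)⁻¹)
    (α : ℝ) (hα0 : 0 < α) (hα1 : α < 1)
    (γ : ℕ → ℝ) (hγ : ∀ t, 0 < γ t ∧ γ t ≤ 2 / β)
    (x x' r r' : ℕ → Ω → EuclideanSpace ℝ (Fin d))
    (x0 : EuclideanSpace ℝ (Fin d))
    (hx0 : ∀ ω, x 0 ω = x0) (hx0' : ∀ ω, x' 0 ω = x0)
    (hr0 : ∀ ω, r 0 ω = 0) (hr0' : ∀ ω, r' 0 ω = 0)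
    (hxrec : ∀ t ω, x (t + 1) ω
      = x t ω - α • (r t ω + γ t • gradient (f · (z (idx t ω))) (x t ω - r t ω)))
    (hrrec : ∀ t ω, r (t + 1) ω
      = (1 - α) • (r t ω + γ t • gradient (f · (z (idx t ω))) (x t ω - r t ω)))
    (hxrec' : ∀ t ω, x' (t + 1) ω
      = x' t ω - α • (r' t ω + γ t • gradient (f · (z' (idx t ω))) (x' t ω - r' t ω)))
    (hrrec' : ∀ t ω, r' (t + 1) ω
      = (1 - α) • (r' t ω + γ t • gradient (f · (z' (idx t ω))) (x' t ω - r' t ω)))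
    (T : ℕ) :
    (∫ ω, ‖x T ω - x' T ω‖ ∂μ
        ≤ (2 * L / N) * ∑ t ∈ Finset.range T, (1 - (1 - α) ^ (T - t)) * γ t) ∧
    ∀ zz : Z, ∫ ω, (f (x T ω) zz - f (x' T ω) zz) ∂μ
        ≤ (2 * L ^ 2 / N) * ∑ t ∈ Finset.range T, (1 - (1 - α) ^ (T - t)) * γ t := by
  have hrun : IsRSGDScaleRun (fun t ω => gradient (f · (z (idx t ω)))) α γ x0 x r :=
    ⟨hx0, hr0, hxrec, hrrec⟩
  have hrun' : IsRSGDScaleRun (fun t ω => gradient (f · (z' (idx t ω)))) α γ x0 x' r' :=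
    ⟨hx0', hr0', hxrec', hrrec'⟩
  have hA : ∀ t, MeasurableSet {ω | idx t ω = i₀} := fun t =>
    hidx_meas t (measurableSet_singleton i₀)
  -- the two runs use the same gradient except when the differing sample `i₀` is drawn
  have hpath := hrun.norm_sub_le_sum hrun' hα0.le hα1.le (b := fun t =>
      {ω | idx t ω = i₀}.indicator fun _ => 2 * L * γ t) (fun t ω u v => by
    by_cases hi : idx t ω = i₀
    · simpa [hi] using norm_sub_smul_sub_sub_smul_le (hlip _) (hlip _) (hγ t).1.le u v
    · simpa [hi, hdiff_one _ hi] using (hconv _).norm_sub_smul_gradient_sub_le (hdiff _) hβ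
        (hsmooth _) (hγ t).1.le (hγ t).2 u v) T
  have hgc : ∀ zz, Continuous (gradient (f · zz)) := fun zz =>
    (LipschitzWith.of_dist_le' fun a b => by simpa [dist_eq_norm] using hsmooth zz a b).continuous
  have hxT := (hrun.measurable (fun t w hw => (hidx_meas t).apply_of_countable_index hw
    fun k => (hgc (z k)).measurable) T).1
  have hxT' := (hrun'.measurable (fun t w hw => (hidx_meas t).apply_of_countable_index hw
    fun k => (hgc (z' k)).measurable) T).1
  obtain ⟨hD, hE⟩ := integrable_and_integral_le_of_le_sum_mul_indicator
    (X := fun ω => ‖x T ω - x' T ω‖) (hxT.sub hxT').norm.aestronglyMeasurable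
    (fun ω => norm_nonneg _) hA (fun t => hidx_unif t i₀) hpath
  refine ⟨hE, fun zz => ?_⟩
  have hL : 0 ≤ L := (norm_nonneg _).trans (hlip zz x0)
  calc ∫ ω, (f (x T ω) zz - f (x' T ω) zz) ∂μ ≤ L * ∫ ω, ‖x T ω - x' T ω‖ ∂μ :=
        integral_sub_le_mul_integral_norm_sub (hdiff zz).continuous
          (norm_sub_le_of_norm_gradient_le (hdiff zz) (hlip zz)) hxT.aestronglyMeasurable
          hxT'.aestronglyMeasurable hD
    _ ≤ L * ((2 * L / N) * ∑ t ∈ Finset.range T, (1 - (1 - α) ^ (T - t)) * γ t) := by gcongr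
    _ = _ := by ring

/-- Convex generalization error of RSGD-scale: with convex, β-smooth,
L-Lipschitz losses, two datasets differing in exactly one entry, i.i.d. uniform sampling
indices shared by both runs, RSGD-scale with `α ∈ (0,1)` and `0 < γ t ≤ 2/β` satisfies
`E‖x T - x' T‖ ≤ (2L/N) ∑_{t<T} (1 - (1-α)^(T-t)) γ t`, and consequently for every `z`,
`E[f(x T, z) - f(x' T, z)] ≤ (2L²/N) ∑_{t<T} (1 - (1-α)^(T-t)) γ t`. -/
theorem rsgd_scale_convex_stability
    {d N : ℕ} (hN : 1 ≤ N)
    {Z : Type*} [MeasurableSpace Z]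
    (f : EuclideanSpace ℝ (Fin d) → Z → ℝ) (β L : ℝ) (hβ : 0 < β) (hL : 0 ≤ L)
    (hconv : ∀ z, ConvexOn ℝ Set.univ (f · z))
    (hdiff : ∀ z, Differentiable ℝ (f · z))
    (hsmooth : ∀ z x y, ‖gradient (f · z) x - gradient (f · z) y‖ ≤ β * ‖x - y‖)
    (hlip : ∀ z x, ‖gradient (f · z) x‖ ≤ L)
    (z z' : Fin N → Z) (i₀ : Fin N)
    (hdiff_one : ∀ j, j ≠ i₀ → z j = z' j) (hne : z i₀ ≠ z' i₀)
    {Ω : Type*} {m0 : MeasurableSpace Ω} (μ : Measure Ω) [IsProbabilityMeasure μ]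
    (idx : ℕ → Ω → Fin N)
    (hidx_meas : ∀ t, Measurable (idx t))
    (hidx_unif : ∀ t k, μ {ω | idx t ω = k} = (N : ENNReal)⁻¹)
    (hidx_indep : iIndepFun idx μ)
    (α : ℝ) (hα0 : 0 < α) (hα1 : α < 1)
    (γ : ℕ → ℝ) (hγ : ∀ t, 0 < γ t ∧ γ t ≤ 2 / β)
    (x x' r r' : ℕ → Ω → EuclideanSpace ℝ (Fin d))
    (x0 : EuclideanSpace ℝ (Fin d))
    (hx0 : ∀ ω, x 0 ω = x0) (hx0' : ∀ ω, x' 0 ω = x0)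
    (hr0 : ∀ ω, r 0 ω = 0) (hr0' : ∀ ω, r' 0 ω = 0)
    (hxrec : ∀ t ω, x (t + 1) ω
      = x t ω - α • (r t ω + γ t • gradient (f · (z (idx t ω))) (x t ω - r t ω)))
    (hrrec : ∀ t ω, r (t + 1) ω
      = (1 - α) • (r t ω + γ t • gradient (f · (z (idx t ω))) (x t ω - r t ω)))
    (hxrec' : ∀ t ω, x' (t + 1) ω
      = x' t ω - α • (r' t ω + γ t • gradient (f · (z' (idx t ω))) (x' t ω - r' t ω)))
    (hrrec' : ∀ t ω, r' (t + 1) ω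
      = (1 - α) • (r' t ω + γ t • gradient (f · (z' (idx t ω))) (x' t ω - r' t ω)))
    (T : ℕ) (hT : 1 ≤ T) :
    (∫ ω, ‖x T ω - x' T ω‖ ∂μ
        ≤ (2 * L / N) * ∑ t ∈ Finset.range T, (1 - (1 - α) ^ (T - t)) * γ t) ∧
    ∀ zz : Z, ∫ ω, (f (x T ω) zz - f (x' T ω) zz) ∂μ
        ≤ (2 * L ^ 2 / N) * ∑ t ∈ Finset.range T, (1 - (1 - α) ^ (T - t)) * γ t :=
  rsgd_scale_convex_stability_general f β L hβ hconv hdiff hsmooth hlip z z' i₀ hdiff_one (m0 := m0)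
    μ idx hidx_meas hidx_unif α hα0 hα1 γ hγ x x' r r' x0 hx0 hx0' hr0 hr0' hxrec hrrec hxrec'
    hrrec' T
end
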